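/- arXiv:1307.3327 — 3 statements merged into one kernel-verified Lean document; each statement's English description precedes it below -/
import Mathlib

section
/- Let P(x,y) = y·log y, Q = 0, R = 1/(3y), S = 0 be defined for y > 0. Then the Lie linearization invariants A = ∂²P/∂y² − 2∂²Q/∂x∂y + ∂²R/∂x² + 2P·∂S/∂x + S·∂P/∂x − 3P·∂R/∂y − 3R·∂P/∂y − 3Q·∂R/∂x + 6Q·∂Q/∂y and B = ∂²S/∂x² − 2∂²R/∂x∂y + ∂²Q/∂y² − 2S·∂P/∂y − P·∂S/∂y + 3S·∂Q/∂x + 3Q·∂S/∂x + 3R·∂Q/∂y − 6R·∂R/∂x both vanish identically on {(x,y) : y > 0}. -/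
/-- partial derivative in the first (x) variable -/
noncomputable def pd1 (f : ℝ → ℝ → ℝ) : ℝ → ℝ → ℝ := fun x y => deriv (fun t => f t y) x
/-- partial derivative in the second (y) variable -/
noncomputable def pd2 (f : ℝ → ℝ → ℝ) : ℝ → ℝ → ℝ := fun x y => deriv (fun t => f x t) y

/-- Lie's first linearization invariant A for y'' = P + 3Q y' + 3R y'^2 + S y'^3 -/
noncomputable def lieA (P Q R S : ℝ → ℝ → ℝ) : ℝ → ℝ → ℝ := fun x y =>
  pd2 (pd2 P) x y - 2 * pd1 (pd2 Q) x y + pd1 (pd1 R) x y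
    + 2 * P x y * pd1 S x y + S x y * pd1 P x y
    - 3 * P x y * pd2 R x y - 3 * R x y * pd2 P x y
    - 3 * Q x y * pd1 R x y + 6 * Q x y * pd2 Q x y

/-- Lie's second linearization invariant B -/
noncomputable def lieB (P Q R S : ℝ → ℝ → ℝ) : ℝ → ℝ → ℝ := fun x y =>
  pd1 (pd1 S) x y - 2 * pd1 (pd2 R) x y + pd2 (pd2 Q) x y
    - 2 * S x y * pd2 P x y - P x y * pd2 S x y
    + 3 * S x y * pd1 Q x y + 3 * Q x y * pd1 S x y
    + 3 * R x y * pd2 Q x y - 6 * R x y * pd1 R x y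

/-! The equation is autonomous with `Q = S = 0`, so `B` vanishes identically and `A` reduces to
`p'' - 3 (p r)'` for `P = p(y)`, `R = r(y)`. Here `p r = (log y) / 3`, and both `p''` and
`3 (p r)'` equal `1 / y`. -/

section IndependentOfX

variable (g : ℝ → ℝ)

lemma pd1_indep_x : pd1 (fun _ y => g y) = fun _ _ => 0 := by
  ext x y
  exact deriv_const x (g y)

lemma pd2_indep_x : pd2 (fun _ y => g y) = fun _ y => deriv g y := rfl

end IndependentOfX

section Autonomous

variable (p r : ℝ → ℝ) (x y : ℝ)

lemma lieA_autonomous :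
    lieA (fun _ y => p y) (fun _ _ => 0) (fun _ y => r y) (fun _ _ => 0) x y =
      deriv (deriv p) y - 3 * p y * deriv r y - 3 * r y * deriv p y := by
  simp only [lieA, pd1_indep_x, pd2_indep_x]
  ring

lemma lieB_autonomous :
    lieB (fun _ y => p y) (fun _ _ => 0) (fun _ y => r y) (fun _ _ => 0) x y = 0 := by
  simp only [lieB, pd1_indep_x, pd2_indep_x, deriv_const']
  ring

end Autonomous

lemma deriv_one_div_const_mul (c y : ℝ) : deriv (fun t => 1 / (c * t)) y = -(c * y ^ 2)⁻¹ := by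
  simp [mul_comm]

theorem kamke_6_113_linearizable :
    ∀ x y : ℝ, 0 < y →
      lieA (fun _ y => y * Real.log y) (fun _ _ => 0) (fun _ y => 1 / (3 * y)) (fun _ _ => 0) x y = 0 ∧
      lieB (fun _ y => y * Real.log y) (fun _ _ => 0) (fun _ y => 1 / (3 * y)) (fun _ _ => 0) x y = 0 := by
  intro x y hy
  refine ⟨?_, lieB_autonomous _ _ x y⟩
  have hp'' : deriv (deriv fun t => t * Real.log t) y = y⁻¹ := Real.deriv2_mul_log y
  rw [lieA_autonomous, hp'', Real.deriv_mul_log hy.ne', deriv_one_div_const_mul]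
  field_simp
  ring
end

section
/- Let c ∈ ℝ, let I ⊆ ℝ be an open interval on which 1 + c·x > 0, and let y be twice differentiable with y(t) > 0 and y''(t) = 1/y(t)³ for all t in the image of t(x) = x/(1+cx), x ∈ I. Then w(x) = (1+cx)·y(x/(1+cx)) satisfies w(x) > 0 and w''(x) = 1/w(x)³ for all x ∈ I. -/
/-!
The map `x ↦ x / (1 + c x)` has derivative `(1 + c x)⁻²`, and a direct computation shows that
`w x = (1 + c x) · y (x / (1 + c x))` satisfies `w'' x = y'' (x / (1 + c x)) / (1 + c x) ^ 3`.
Since `1 + c x` is a positive factor of `w`, the equation `y'' = 1 / y³` transfers to `w`.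
-/

namespace ProjectiveFlow

variable {c x : ℝ}

theorem hasDerivAt_one_add_mul : HasDerivAt (fun x : ℝ => 1 + c * x) c x := by
  simpa using ((hasDerivAt_id x).const_mul c).const_add 1

theorem hasDerivAt_div_one_add_mul (hx : 1 + c * x ≠ 0) :
    HasDerivAt (fun x => x / (1 + c * x)) (1 / (1 + c * x) ^ 2) x := by
  refine ((hasDerivAt_id x).div hasDerivAt_one_add_mul hx).congr_deriv ?_
  simp only [id]
  field_simp
  ring

theorem hasDerivAt_one_add_mul_mul_comp {y : ℝ → ℝ} {y' : ℝ} (hx : 1 + c * x ≠ 0)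
    (hy : HasDerivAt y y' (x / (1 + c * x))) :
    HasDerivAt (fun x => (1 + c * x) * y (x / (1 + c * x)))
      (c * y (x / (1 + c * x)) + y' / (1 + c * x)) x := by
  refine (hasDerivAt_one_add_mul.mul (hy.comp x (hasDerivAt_div_one_add_mul hx))).congr_deriv ?_
  simp only [Function.comp_apply]
  field_simp

theorem hasDerivAt_deriv_one_add_mul_mul_comp {y y₁ : ℝ → ℝ} {y₂ : ℝ} (hx : 1 + c * x ≠ 0)
    (hy : HasDerivAt y (y₁ (x / (1 + c * x))) (x / (1 + c * x)))
    (hy₁ : HasDerivAt y₁ y₂ (x / (1 + c * x))) :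
    HasDerivAt (fun x => c * y (x / (1 + c * x)) + y₁ (x / (1 + c * x)) / (1 + c * x))
      (y₂ / (1 + c * x) ^ 3) x := by
  have ht := hasDerivAt_div_one_add_mul hx
  refine (((hy.comp x ht).const_mul c).add
    ((hy₁.comp x ht).div hasDerivAt_one_add_mul hx)).congr_deriv ?_
  simp only [Function.comp_apply]
  field_simp
  ring

end ProjectiveFlow

open ProjectiveFlow in
theorem cube_inverse_model_projective_symmetry_general
    (c : ℝ) (I : Set ℝ)
    (hpos : ∀ x ∈ I, 0 < 1 + c * x)
    (y y₁ y₂ : ℝ → ℝ)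
    (hy : ∀ t ∈ (fun x => x / (1 + c * x)) '' I, HasDerivAt y (y₁ t) t)
    (hy₁ : ∀ t ∈ (fun x => x / (1 + c * x)) '' I, HasDerivAt y₁ (y₂ t) t)
    (hypos : ∀ t ∈ (fun x => x / (1 + c * x)) '' I, 0 < y t)
    (hode : ∀ t ∈ (fun x => x / (1 + c * x)) '' I, y₂ t = 1 / (y t) ^ 3) :
    (∀ x ∈ I, 0 < (1 + c * x) * y (x / (1 + c * x))) ∧
    ∃ w' : ℝ → ℝ, ∀ x ∈ I,
      HasDerivAt (fun x => (1 + c * x) * y (x / (1 + c * x))) (w' x) x ∧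
      HasDerivAt w' (1 / ((1 + c * x) * y (x / (1 + c * x))) ^ 3) x := by
  refine ⟨fun x hx => mul_pos (hpos x hx) (hypos _ ⟨x, hx, rfl⟩),
    fun x => c * y (x / (1 + c * x)) + y₁ (x / (1 + c * x)) / (1 + c * x), fun x hx => ?_⟩
  have hx' : 1 + c * x ≠ 0 := (hpos x hx).ne'
  have ht : x / (1 + c * x) ∈ (fun x => x / (1 + c * x)) '' I := ⟨x, hx, rfl⟩
  refine ⟨hasDerivAt_one_add_mul_mul_comp hx' (hy _ ht), ?_⟩
  convert hasDerivAt_deriv_one_add_mul_mul_comp hx' (hy _ ht) (hy₁ _ ht) using 1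
  rw [hode _ ht, mul_pow, div_div, mul_comm]

/-- Projective symmetry of y'' = 1/y³: w(x) = (1+cx)·y(x/(1+cx)) is again a solution. -/
theorem cube_inverse_model_projective_symmetry
    (c : ℝ) (I : Set ℝ) (hI : IsOpen I) (hIconv : Convex ℝ I)
    (hpos : ∀ x ∈ I, 0 < 1 + c * x)
    (y y₁ y₂ : ℝ → ℝ)
    (hy : ∀ t ∈ (fun x => x / (1 + c * x)) '' I, HasDerivAt y (y₁ t) t)
    (hy₁ : ∀ t ∈ (fun x => x / (1 + c * x)) '' I, HasDerivAt y₁ (y₂ t) t)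
    (hypos : ∀ t ∈ (fun x => x / (1 + c * x)) '' I, 0 < y t)
    (hode : ∀ t ∈ (fun x => x / (1 + c * x)) '' I, y₂ t = 1 / (y t) ^ 3) :
    (∀ x ∈ I, 0 < (1 + c * x) * y (x / (1 + c * x))) ∧
    ∃ w' : ℝ → ℝ, ∀ x ∈ I,
      HasDerivAt (fun x => (1 + c * x) * y (x / (1 + c * x))) (w' x) x ∧
      HasDerivAt w' (1 / ((1 + c * x) * y (x / (1 + c * x))) ^ 3) x :=
  cube_inverse_model_projective_symmetry_general c I hpos y y₁ y₂ hy hy₁ hypos hode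
end

section
/- Fix k ≠ 0 and c ∈ ℝ, and let y : ℝ → ℝ be twice differentiable satisfying y''(x) = (y'(x))³ − k·y(x)·(y'(x))² + k²·y(x)²·y'(x)/3 + 1/k + k²·y(x)/9 − k³·y(x)³/27 for all x. Then z(x) = y(x) + c·exp(kx/3) satisfies the same equation: z''(x) = (z'(x))³ − k·z(x)·(z'(x))² + k²·z(x)²·z'(x)/3 + 1/k + k²·z(x)/9 − k³·z(x)³/27 for all x. -/
/-! The substitution `z = y + w` with `w = c e^{kx/3}` leaves `y' - k y / 3` unchanged, since
`w' = k w / 3`. Writing the right-hand side as `(y' - k y / 3)³ + 1/k + k² y / 9`, it therefore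
grows by `k² w / 9 = w''`, exactly as the left-hand side does. -/

open Real

/-- The right-hand side of the model equation, as a function of `y = v` and `y' = u`. -/
noncomputable def modelRhs (k v u : ℝ) : ℝ :=
  u ^ 3 - k * v * u ^ 2 + k ^ 2 * v ^ 2 * u / 3 + 1 / k + k ^ 2 * v / 9 - k ^ 3 * v ^ 3 / 27

theorem modelRhs_eq_cube (k v u : ℝ) :
    modelRhs k v u = (u - k * v / 3) ^ 3 + 1 / k + k ^ 2 * v / 9 := by
  unfold modelRhs; ring

theorem modelRhs_shift (k v u w : ℝ) :
    modelRhs k (v + w) (u + k / 3 * w) = modelRhs k v u + (k / 3) ^ 2 * w := by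
  rw [modelRhs_eq_cube, modelRhs_eq_cube]; ring

theorem hasDerivAt_const_mul_exp_mul_div (c k d x : ℝ) :
    HasDerivAt (fun x => c * exp (k * x / d)) (k / d * (c * exp (k * x / d))) x :=
  ((((hasDerivAt_id' x).const_mul k).div_const d).exp.const_mul c).congr_deriv (by ring)

section AddEigenfunction

variable {y e : ℝ → ℝ} {a : ℝ}

theorem deriv_add_of_hasDerivAt_mul_self (he : ∀ x, HasDerivAt e (a * e x) x)
    (hy : Differentiable ℝ y) :
    deriv (fun x => y x + e x) = fun x => deriv y x + a * e x := by
  funext x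
  exact ((hy x).hasDerivAt.add (he x)).deriv

theorem deriv_deriv_add_of_hasDerivAt_mul_self (he : ∀ x, HasDerivAt e (a * e x) x)
    (hy : Differentiable ℝ y) (hy' : Differentiable ℝ (deriv y)) (x : ℝ) :
    deriv (deriv (fun x => y x + e x)) x = deriv (deriv y) x + a ^ 2 * e x := by
  rw [deriv_add_of_hasDerivAt_mul_self he hy]
  have h := (hy' x).hasDerivAt.fun_add ((he x).const_mul a)
  rw [h.deriv]; ring

end AddEigenfunction

theorem theorem6_model_symmetry_general (k : ℝ) (c : ℝ)
    (y : ℝ → ℝ) (hy : Differentiable ℝ y) (hy' : Differentiable ℝ (deriv y))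
    (hode : ∀ x, deriv (deriv y) x
        = (deriv y x) ^ 3 - k * y x * (deriv y x) ^ 2 + k ^ 2 * (y x) ^ 2 * deriv y x / 3
          + 1 / k + k ^ 2 * y x / 9 - k ^ 3 * (y x) ^ 3 / 27) :
    ∀ x, deriv (deriv (fun x => y x + c * Real.exp (k * x / 3))) x
        = (deriv (fun x => y x + c * Real.exp (k * x / 3)) x) ^ 3
          - k * (y x + c * Real.exp (k * x / 3))
              * (deriv (fun x => y x + c * Real.exp (k * x / 3)) x) ^ 2
          + k ^ 2 * (y x + c * Real.exp (k * x / 3)) ^ 2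
              * deriv (fun x => y x + c * Real.exp (k * x / 3)) x / 3
          + 1 / k + k ^ 2 * (y x + c * Real.exp (k * x / 3)) / 9
          - k ^ 3 * (y x + c * Real.exp (k * x / 3)) ^ 3 / 27 := by
  intro x
  have hexp := hasDerivAt_const_mul_exp_mul_div c k 3
  have hode' : ∀ x, deriv (deriv y) x = modelRhs k (y x) (deriv y x) := hode
  change _ = modelRhs k (y x + c * exp (k * x / 3))
    (deriv (fun x => y x + c * exp (k * x / 3)) x)
  rw [deriv_deriv_add_of_hasDerivAt_mul_self hexp hy hy', deriv_add_of_hasDerivAt_mul_self hexp hy,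
    hode', modelRhs_shift]

/-- Symmetry of the Theorem 6 model equation under y ↦ y + c·e^(kx/3). -/
theorem theorem6_model_symmetry (k : ℝ) (hk : k ≠ 0) (c : ℝ)
    (y : ℝ → ℝ) (hy : Differentiable ℝ y) (hy' : Differentiable ℝ (deriv y))
    (hode : ∀ x, deriv (deriv y) x
        = (deriv y x) ^ 3 - k * y x * (deriv y x) ^ 2 + k ^ 2 * (y x) ^ 2 * deriv y x / 3
          + 1 / k + k ^ 2 * y x / 9 - k ^ 3 * (y x) ^ 3 / 27) :
    ∀ x, deriv (deriv (fun x => y x + c * Real.exp (k * x / 3))) x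
        = (deriv (fun x => y x + c * Real.exp (k * x / 3)) x) ^ 3
          - k * (y x + c * Real.exp (k * x / 3))
              * (deriv (fun x => y x + c * Real.exp (k * x / 3)) x) ^ 2
          + k ^ 2 * (y x + c * Real.exp (k * x / 3)) ^ 2
              * deriv (fun x => y x + c * Real.exp (k * x / 3)) x / 3
          + 1 / k + k ^ 2 * (y x + c * Real.exp (k * x / 3)) / 9
          - k ^ 3 * (y x + c * Real.exp (k * x / 3)) ^ 3 / 27 :=
  theorem6_model_symmetry_general k c y hy hy' hode
end
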